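/- arXiv:2109.11784 — 2 statements merged into one kernel-verified Lean document; each statement's English description precedes it below -/
import Mathlib

section
/- With the notation of the odd case (n ≥ 3 odd, p > n−2 odd, m₀ = (p−n+2)/2, intervals I_{(n₁,…,n_l)} and J_{(n₁,…,n_l)} indexed by tuples from {0,…,n−3}), the union over all tuples of all finite lengths l ≥ 1 of the intervals I and J covers the interval [1/2 − (n−2)/(2p), 1/2 + (n−2)/(2p)) up to a set of Lebesgue measure zero. -/
open scoped ENNReal


/-- The real number with base-`p` digits given by the list `L` after the point. -/
noncomputable def padicSum (p : ℕ) (L : List ℕ) : ℝ :=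
  ∑ i ∈ Finset.range L.length, (L.getD i 0 : ℝ) / (p : ℝ) ^ (i + 1)

lemma padicSum_nil (p : ℕ) : padicSum p [] = 0 := by simp [padicSum]

lemma padicSum_append_singleton (p : ℕ) (L : List ℕ) (j : ℕ) :
    padicSum p (L ++ [j]) = padicSum p L + (j : ℝ) / (p : ℝ) ^ (L.length + 1) := by
  unfold padicSum
  rw [List.length_append, List.length_singleton, Finset.sum_range_succ]
  congr 1
  · exact Finset.sum_congr rfl fun i hi => by
      rw [List.getD_append _ _ _ _ (Finset.mem_range.mp hi)]
  · rw [List.getD_append_right _ _ _ _ le_rfl, Nat.sub_self]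
    simp

/-- Auxiliary: the union of the "middle" intervals at level `l`. -/
noncomputable def midSet (p m₀ n l : ℕ) : Set ℝ :=
  ⋃ f : Fin l → Fin (n - 2),
    Set.Ico (padicSum p (List.ofFn fun i => (f i : ℕ) + m₀) + (m₀ : ℝ) / (p : ℝ) ^ (l + 1))
      (padicSum p (List.ofFn fun i => (f i : ℕ) + m₀) + ((m₀ : ℝ) + n - 2) / (p : ℝ) ^ (l + 1))

theorem almost_cover_odd (n p m₀ : ℕ) (hn : 3 ≤ n) (hodd : Odd n) (hpodd : Odd p)
    (hp : (n : ℤ) - 2 < p) (hm : 2 * m₀ + n = p + 2) :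
    MeasureTheory.volume
      (Set.Ico ((1 : ℝ) / 2 - ((n : ℝ) - 2) / (2 * p))
          ((1 : ℝ) / 2 + ((n : ℝ) - 2) / (2 * p)) \
        ⋃ L ∈ {L : List ℕ | L ≠ [] ∧ ∀ x ∈ L, x ≤ n - 3},
          (Set.Ico (padicSum p (L.map (· + m₀)))
              (padicSum p (L.map (· + m₀)) + (m₀ : ℝ) / (p : ℝ) ^ (L.length + 1)) ∪
           Set.Ico (padicSum p (L.map (· + m₀))
              + ((m₀ + n - 2 : ℕ) : ℝ) / (p : ℝ) ^ (L.length + 1))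
              (padicSum p (L.map (· + m₀)) + 1 / (p : ℝ) ^ L.length)))
      = 0 := by
  have hnp : n - 2 < p := by omega
  have hm₀ : 1 ≤ m₀ := by omega
  have hp0 : (0 : ℝ) < p := by exact_mod_cast (by omega : 0 < p)
  have hmR : 2 * (m₀ : ℝ) + n = p + 2 := by exact_mod_cast hm
  have hcast : ((m₀ + n - 2 : ℕ) : ℝ) = (m₀ : ℝ) + n - 2 := by
    have : ((m₀ + n - 2 : ℕ) : ℝ) = ((m₀ : ℕ) : ℝ) + ((n : ℕ) : ℝ) - 2 := by
      push_cast [Nat.cast_sub (by omega : 2 ≤ m₀ + n)]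
      ring
    simpa using this
  set U : Set ℝ :=
    ⋃ L ∈ {L : List ℕ | L ≠ [] ∧ ∀ x ∈ L, x ≤ n - 3},
      (Set.Ico (padicSum p (L.map (· + m₀)))
          (padicSum p (L.map (· + m₀)) + (m₀ : ℝ) / (p : ℝ) ^ (L.length + 1)) ∪
       Set.Ico (padicSum p (L.map (· + m₀))
          + ((m₀ + n - 2 : ℕ) : ℝ) / (p : ℝ) ^ (L.length + 1))
          (padicSum p (L.map (· + m₀)) + 1 / (p : ℝ) ^ L.length)) with hUdef
  have hmval : (m₀ : ℝ) = ((p : ℝ) + 2 - n) / 2 := by linarith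
  have hd1 : (1 : ℝ) / 2 - ((n : ℝ) - 2) / (2 * p) = (m₀ : ℝ) / p := by
    rw [hmval]; field_simp; ring
  have hd2 : (1 : ℝ) / 2 + ((n : ℝ) - 2) / (2 * p) = ((m₀ : ℝ) + n - 2) / p := by
    rw [hmval]; field_simp; ring
  -- the key inductive step
  have step : ∀ l, midSet p m₀ n l \ U ⊆ midSet p m₀ n (l + 1) := by
    intro l x hx
    obtain ⟨hxM, hxU⟩ := hx
    rw [midSet, Set.mem_iUnion] at hxM
    obtain ⟨f, hx1, hx2⟩ := hxM
    set a := padicSum p (List.ofFn fun i => (f i : ℕ) + m₀) with ha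
    have hql : (0 : ℝ) < (p : ℝ) ^ (l + 1) := by positivity
    set y := (x - a) * (p : ℝ) ^ (l + 1) with hy
    have hy1 : (m₀ : ℝ) ≤ y := by
      rw [hy, ← div_le_iff₀ hql]
      linarith
    have hy2 : y < (m₀ : ℝ) + n - 2 := by
      rw [hy, ← lt_div_iff₀ hql]
      linarith
    have hy0 : (0 : ℝ) ≤ y := le_trans (by positivity) hy1
    set k := ⌊y⌋₊ with hk
    have hky : (k : ℝ) ≤ y := Nat.floor_le hy0
    have hyk : y < (k : ℝ) + 1 := Nat.lt_floor_add_one y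
    have hmk : m₀ ≤ k := Nat.le_floor hy1
    have hklt : k < m₀ + n - 2 := by
      have h2 : y < ((m₀ + n - 2 : ℕ) : ℝ) := by rw [hcast]; exact hy2
      exact (Nat.floor_lt hy0).mpr h2
    set d := k - m₀ with hd
    have hdlt : d < n - 2 := by omega
    have hdm : d + m₀ = k := by omega
    -- the list of length l+1
    set L' : List ℕ := (List.ofFn fun i => (f i : ℕ)) ++ [d] with hL'
    have hL'mem : L' ∈ {L : List ℕ | L ≠ [] ∧ ∀ x ∈ L, x ≤ n - 3} := by
      constructor
      · simp [hL']
      · intro z hz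
        rw [hL', List.mem_append] at hz
        rcases hz with hz | hz
        · rw [List.mem_ofFn] at hz
          obtain ⟨i, hi⟩ := hz
          have h2 := (f i).isLt
          omega
        · simp at hz
          omega
    have hmap : L'.map (· + m₀) = (List.ofFn fun i => (f i : ℕ) + m₀) ++ [k] := by
      rw [hL', List.map_append, List.map_ofFn]
      simp [Function.comp_def, hdm]
    have hlen : L'.length = l + 1 := by simp [hL']
    have hlenof : (List.ofFn fun i => (f i : ℕ) + m₀).length = l := by simp
    have hpad : padicSum p (L'.map (· + m₀)) = a + (k : ℝ) / (p : ℝ) ^ (l + 1) := by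
      rw [hmap, padicSum_append_singleton, hlenof, ← ha]
    have hxk1 : a + (k : ℝ) / (p : ℝ) ^ (l + 1) ≤ x := by
      have : (k : ℝ) / (p : ℝ) ^ (l + 1) ≤ x - a := by
        rw [div_le_iff₀ hql]; exact hky
      linarith
    have hxk2 : x < a + (k : ℝ) / (p : ℝ) ^ (l + 1) + 1 / (p : ℝ) ^ (l + 1) := by
      have : x - a < ((k : ℝ) + 1) / (p : ℝ) ^ (l + 1) := by
        rw [lt_div_iff₀ hql]; exact hyk
      have h2 : ((k : ℝ) + 1) / (p : ℝ) ^ (l + 1)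
          = (k : ℝ) / (p : ℝ) ^ (l + 1) + 1 / (p : ℝ) ^ (l + 1) := by ring
      linarith [this, h2 ▸ this]
    -- x is not in the I nor J interval of L'
    have hnotU : x ∉ (Set.Ico (padicSum p (L'.map (· + m₀)))
          (padicSum p (L'.map (· + m₀)) + (m₀ : ℝ) / (p : ℝ) ^ (L'.length + 1)) ∪
       Set.Ico (padicSum p (L'.map (· + m₀))
          + ((m₀ + n - 2 : ℕ) : ℝ) / (p : ℝ) ^ (L'.length + 1))
          (padicSum p (L'.map (· + m₀)) + 1 / (p : ℝ) ^ L'.length)) := by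
      intro hmem
      exact hxU (Set.mem_biUnion hL'mem hmem)
    rw [hpad, hlen, hcast] at hnotU
    simp only [Set.mem_union, not_or] at hnotU
    obtain ⟨hnI, hnJ⟩ := hnotU
    rw [Set.mem_Ico, not_and, not_lt] at hnI
    rw [Set.mem_Ico, not_and, not_lt] at hnJ
    have hge : a + (k : ℝ) / (p : ℝ) ^ (l + 1) + (m₀ : ℝ) / (p : ℝ) ^ (l + 1 + 1) ≤ x :=
      hnI hxk1
    have hlt : x < a + (k : ℝ) / (p : ℝ) ^ (l + 1) + ((m₀ : ℝ) + n - 2) / (p : ℝ) ^ (l + 1 + 1) := by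
      by_contra hcon
      push_neg at hcon
      have := hnJ hcon
      linarith
    -- conclude membership in midSet (l+1)
    rw [midSet, Set.mem_iUnion]
    refine ⟨Fin.snoc f ⟨d, hdlt⟩, ?_, ?_⟩
    · have heq : (List.ofFn fun i : Fin (l + 1) => ((Fin.snoc f ⟨d, hdlt⟩ : Fin (l+1) → Fin (n-2)) i : ℕ) + m₀)
          = (List.ofFn fun i : Fin l => (f i : ℕ) + m₀) ++ [k] := by
        rw [List.ofFn_succ']
        simp [Fin.snoc_castSucc, Fin.snoc_last, List.concat_eq_append, hdm]
      rw [heq, padicSum_append_singleton, hlenof, ← ha]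
      convert hge using 3
    · have heq : (List.ofFn fun i : Fin (l + 1) => ((Fin.snoc f ⟨d, hdlt⟩ : Fin (l+1) → Fin (n-2)) i : ℕ) + m₀)
          = (List.ofFn fun i : Fin l => (f i : ℕ) + m₀) ++ [k] := by
        rw [List.ofFn_succ']
        simp [Fin.snoc_castSucc, Fin.snoc_last, List.concat_eq_append, hdm]
      rw [heq, padicSum_append_singleton, hlenof, ← ha]
      convert hlt using 3
  -- the difference set is inside every midSet
  have subset_all : ∀ l,
      Set.Ico ((1 : ℝ) / 2 - ((n : ℝ) - 2) / (2 * p))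
        ((1 : ℝ) / 2 + ((n : ℝ) - 2) / (2 * p)) \ U ⊆ midSet p m₀ n l := by
    intro l
    induction l with
    | zero =>
      intro x hx
      rw [midSet, Set.mem_iUnion]
      refine ⟨fun i => i.elim0, ?_⟩
      have hx' := hx.1
      rw [Set.mem_Ico, hd1, hd2] at hx'
      simp only [List.ofFn_zero, padicSum_nil, zero_add, pow_one]
      exact hx'
    | succ l ih =>
      intro x hx
      exact step l ⟨ih hx, hx.2⟩
  -- measure bound for midSet
  set r : ℝ≥0∞ := ((n - 2 : ℕ) : ℝ≥0∞) / (p : ℝ≥0∞) with hr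
  have hvol : ∀ l, MeasureTheory.volume (midSet p m₀ n l) ≤ r ^ (l + 1) := by
    intro l
    have hlen : ((m₀ : ℝ) + n - 2) / (p : ℝ) ^ (l + 1) - (m₀ : ℝ) / (p : ℝ) ^ (l + 1)
        = ((n - 2 : ℕ) : ℝ) / (p : ℝ) ^ (l + 1) := by
      rw [Nat.cast_sub (by omega : 2 ≤ n)]
      push_cast
      ring
    calc MeasureTheory.volume (midSet p m₀ n l)
        ≤ ∑' f : Fin l → Fin (n - 2), MeasureTheory.volume
            (Set.Ico (padicSum p (List.ofFn fun i => (f i : ℕ) + m₀) + (m₀ : ℝ) / (p : ℝ) ^ (l + 1))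
              (padicSum p (List.ofFn fun i => (f i : ℕ) + m₀) + ((m₀ : ℝ) + n - 2) / (p : ℝ) ^ (l + 1))) :=
          MeasureTheory.measure_iUnion_le _
      _ = ∑' _f : Fin l → Fin (n - 2), ENNReal.ofReal (((n - 2 : ℕ) : ℝ) / (p : ℝ) ^ (l + 1)) := by
          refine tsum_congr fun f => ?_
          rw [Real.volume_Ico]
          congr 1
          rw [← hlen]
          ring
      _ = (Fintype.card (Fin l → Fin (n - 2))) • ENNReal.ofReal (((n - 2 : ℕ) : ℝ) / (p : ℝ) ^ (l + 1)) := by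
          rw [tsum_fintype, Finset.sum_const, Finset.card_univ]
      _ ≤ r ^ (l + 1) := by
          rw [Fintype.card_fun, Fintype.card_fin, Fintype.card_fin]
          rw [ENNReal.ofReal_div_of_pos (by positivity), ENNReal.ofReal_natCast,
            ENNReal.ofReal_pow (le_of_lt hp0), ENNReal.ofReal_natCast]
          rw [nsmul_eq_mul, Nat.cast_pow]
          rw [hr, div_eq_mul_inv, div_eq_mul_inv, mul_pow, ← ENNReal.inv_pow, ← mul_assoc,
            ← pow_succ]
    -- done
  have hrlt : r < 1 := by
    rw [hr, ENNReal.div_lt_iff (Or.inl (by simp; omega)) (Or.inl (by simp))]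
    rw [one_mul]
    exact_mod_cast hnp
  have htend : Filter.Tendsto (fun l : ℕ => r ^ (l + 1)) Filter.atTop (nhds 0) :=
    (ENNReal.tendsto_pow_atTop_nhds_zero_of_lt_one hrlt).comp (Filter.tendsto_add_atTop_nat 1)
  have hle : MeasureTheory.volume
      (Set.Ico ((1 : ℝ) / 2 - ((n : ℝ) - 2) / (2 * p))
        ((1 : ℝ) / 2 + ((n : ℝ) - 2) / (2 * p)) \ U) ≤ 0 :=
    ge_of_tendsto' htend fun l =>
      le_trans (MeasureTheory.measure_mono (subset_all l)) (hvol l)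
  exact le_antisymm hle zero_le
end

section
/- Let n ≥ 4 be an even integer and p > n−2 a prime (or any integer ≥ 2). For n_i ∈ {0,…,n−3} set j_i = n_i if n_i ≤ n/2 − 2 and j_i = p − (n_i − (n/2 − 2)) otherwise. For a tuple (n₁,…,n_l) define Ĩ_{(n₁,…,n_l)} = [Σ_{i=1}^l j_i/p^i + (n−2)/(2p^{l+1}), Σ_{i=1}^l j_i/p^i + 1/p^l − (n−2)/(2p^{l+1})). Let A_k = [0, (n−2)/(2p)) minus the union of all Ĩ_{(n₁,…,n_l)} with n₁ ≤ n/2 − 2 and l ≤ k. Then the Lebesgue measure of A_k equals (n−2)^{k+1}/(2p^{k+1}) for all k ≥ 1. In particular, the union over all such tuples of all lengths covers [0, (n−2)/(2p)) up to a set of measure zero. -/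
namespace AkAux

lemma padicSum_nil (p : ℕ) : padicSum p [] = 0 := by simp [padicSum]

lemma padicSum_cons (p d : ℕ) (L : List ℕ) :
    padicSum p (d :: L) = ((d : ℝ) + padicSum p L) / p := by
  have h : padicSum p L / p = ∑ i ∈ Finset.range L.length, (L.getD i 0 : ℝ) / (p:ℝ) ^ (i + 1 + 1) := by
    rw [padicSum, Finset.sum_div]
    exact Finset.sum_congr rfl fun i _ => by rw [div_div, ← pow_succ]
  rw [add_div, h, padicSum, List.length_cons,
    Finset.sum_range_succ' (fun i => ((d :: L).getD i 0 : ℝ) / (p : ℝ) ^ (i + 1)) L.length]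
  simp only [List.getD_cons_succ, List.getD_cons_zero, pow_one]
  rw [add_comm]
  norm_num

lemma padicSum_nonneg (p : ℕ) (L : List ℕ) : 0 ≤ padicSum p L :=
  Finset.sum_nonneg fun i _ => div_nonneg (Nat.cast_nonneg _) (pow_nonneg (Nat.cast_nonneg _) _)

lemma padicSum_add_le (p : ℕ) (hp : 1 ≤ p) (L : List ℕ) (h : ∀ x ∈ L, x < p) :
    padicSum p L + 1 / (p : ℝ) ^ L.length ≤ 1 := by
  have hq : (1:ℝ) ≤ p := by exact_mod_cast hp
  have hq0 : (0:ℝ) < p := by linarith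
  induction L with
  | nil => simp [padicSum_nil]
  | cons d t ih =>
    have ht : ∀ x ∈ t, x < p := fun x hx => h x (List.mem_cons_of_mem _ hx)
    have hd : (d:ℝ) + 1 ≤ p := by
      have := h d (List.mem_cons_self); exact_mod_cast this
    have ih' := ih ht
    rw [padicSum_cons, List.length_cons, pow_succ, ← div_div, ← add_div]
    rw [div_le_one hq0]
    linarith

lemma padicSum_concat (p : ℕ) (L : List ℕ) (e : ℕ) :
    padicSum p (L ++ [e]) = padicSum p L + (e : ℝ) / (p : ℝ) ^ (L.length + 1) := by
  induction L with
  | nil => simp [padicSum_cons, padicSum_nil]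
  | cons d t ih =>
    rw [List.cons_append, padicSum_cons, ih, padicSum_cons, List.length_cons]
    rw [add_div, add_div, div_div, ← pow_succ]
    ring

lemma padicSum_sep (p : ℕ) (hp : 1 ≤ p) :
    ∀ L L' : List ℕ, L.length = L'.length → (∀ x ∈ L, x < p) → (∀ x ∈ L', x < p) →
      L ≠ L' →
      padicSum p L + 1 / (p : ℝ) ^ L.length ≤ padicSum p L' ∨
      padicSum p L' + 1 / (p : ℝ) ^ L.length ≤ padicSum p L := by
  have hq : (1:ℝ) ≤ p := by exact_mod_cast hp
  have hq0 : (0:ℝ) < p := by linarith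
  intro L
  induction L with
  | nil =>
    intro L' hl _ _ hne
    cases L' with
    | nil => exact absurd rfl hne
    | cons a t => simp at hl
  | cons d t ih =>
    intro L' hl hL hL' hne
    cases L' with
    | nil => simp at hl
    | cons d' t' =>
      have hlt : t.length = t'.length := by simpa using hl
      have hdt : ∀ x ∈ t, x < p := fun x hx => hL x (List.mem_cons_of_mem _ hx)
      have hdt' : ∀ x ∈ t', x < p := fun x hx => hL' x (List.mem_cons_of_mem _ hx)
      have key : ∀ a b : ℕ, ∀ u v : List ℕ, a < b → (∀ x ∈ u, x < p) →
          padicSum p (a :: u) + 1 / (p:ℝ) ^ (a :: u).length ≤ padicSum p (b :: v) := by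
        intro a b u v hab hup
        rw [padicSum_cons, padicSum_cons, List.length_cons, pow_succ, ← div_div, ← add_div]
        have h1 : padicSum p u + 1 / (p:ℝ) ^ u.length ≤ 1 := padicSum_add_le p hp u hup
        have h2 : (a:ℝ) + 1 ≤ b := by exact_mod_cast hab
        have h3 : 0 ≤ padicSum p v := padicSum_nonneg p v
        rw [div_le_div_iff_of_pos_right hq0]
        linarith
      have key2 : ∀ a : ℕ, ∀ u v : List ℕ,
          padicSum p u + 1 / (p:ℝ) ^ u.length ≤ padicSum p v →
          padicSum p (a :: u) + 1 / (p:ℝ) ^ (a :: u).length ≤ padicSum p (a :: v) := by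
        intro a u v h
        rw [padicSum_cons, padicSum_cons, List.length_cons, pow_succ, ← div_div, ← add_div]
        rw [div_le_div_iff_of_pos_right hq0]
        linarith
      rcases Nat.lt_trichotomy d d' with hdd | hdd | hdd
      · exact Or.inl (key d d' t t' hdd hdt)
      · subst hdd
        have htt : t ≠ t' := fun h => hne (by rw [h])
        rcases ih t' hlt hdt hdt' htt with h | h
        · exact Or.inl (key2 d t t' h)
        · right
          have h' : padicSum p t' + 1 / (p:ℝ) ^ t'.length ≤ padicSum p t := by
            rw [← hlt]; exact h
          have := key2 d t' t h'
          rw [hl]; exact this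
      · right
        have := key d' d t' t hdd hdt'
        rw [hl]; exact this



def Jpred (p c e : ℕ) : Prop := e ≤ c ∨ (p - (c+1) ≤ e ∧ e < p)

def Jfin (p c : ℕ) : Finset ℕ := Finset.range (c+1) ∪ Finset.Ico (p - (c+1)) p

lemma mem_Jfin {p c e : ℕ} : e ∈ Jfin p c ↔ Jpred p c e := by
  simp [Jfin, Jpred, Nat.lt_succ_iff]

lemma card_Jfin (p c : ℕ) (h : 2*c+3 ≤ p) : (Jfin p c).card = 2*(c+1) := by
  rw [Jfin, Finset.card_union_of_disjoint, Finset.card_range, Nat.card_Ico]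
  · omega
  · rw [Finset.disjoint_left]
    intro a ha hb
    simp only [Finset.mem_range, Finset.mem_Ico] at ha hb
    omega

def F (p c : ℕ) : ℕ → Finset (List ℕ)
  | 0 => ∅
  | 1 => (Finset.range (c+1)).image fun d => [d]
  | (l+2) => ((F p c (l+1)) ×ˢ Jfin p c).image fun x => x.1 ++ [x.2]

lemma length_of_mem_F (p c : ℕ) : ∀ l L, L ∈ F p c l → L.length = l
  | 0, L => by simp [F]
  | 1, L => by
    intro h
    simp only [F, Finset.mem_image, Finset.mem_range] at h
    obtain ⟨d, _, rfl⟩ := h; rfl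
  | (l+2), L => by
    intro h
    simp only [F, Finset.mem_image, Finset.mem_product] at h
    obtain ⟨⟨M, e⟩, ⟨hM, _⟩, rfl⟩ := h
    have := length_of_mem_F p c (l+1) M hM
    simp [this]

lemma card_F (p c : ℕ) (h : 2*c+3 ≤ p) : ∀ l, (F p c (l+1)).card = (c+1) * (2*(c+1))^l := by
  intro l
  induction l with
  | zero =>
    rw [show (0:ℕ)+1 = 1 from rfl, F, Finset.card_image_of_injective, Finset.card_range, pow_zero, mul_one]
    intro a b hab; simpa using hab
  | succ l ih =>
    rw [show l+1+1 = l+2 from rfl, F, Finset.card_image_of_injOn, Finset.card_product,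
      card_Jfin p c h, ih, pow_succ]
    · ring
    · rintro ⟨M, e⟩ hMe ⟨M', e'⟩ hMe' hee
      simp only [Finset.mem_coe, Finset.mem_product] at hMe hMe'
      have hee2 : M ++ [e] = M' ++ [e'] := hee
      have hlen : M.length = M'.length := by
        rw [length_of_mem_F p c _ _ hMe.1, length_of_mem_F p c _ _ hMe'.1]
      obtain ⟨h1, h2⟩ := List.append_inj hee2 hlen
      simp only [List.cons.injEq] at h2
      exact Prod.ext h1 h2.1

lemma headI_append_singleton (M : List ℕ) (e : ℕ) (h : M ≠ []) :
    (M ++ [e]).headI = M.headI := by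
  cases M with
  | nil => exact absurd rfl h
  | cons a t => rfl

lemma headI_dropLast (L : List ℕ) (h : 2 ≤ L.length) : L.dropLast.headI = L.headI := by
  cases L with
  | nil => simp at h
  | cons a t =>
    cases t with
    | nil => simp at h
    | cons b t => simp [List.dropLast]

lemma mem_F_iff (p c : ℕ) : ∀ l L, L ∈ F p c (l+1) ↔
    (L ≠ [] ∧ (∀ x ∈ L, Jpred p c x) ∧ L.headI ≤ c) ∧ L.length = l+1 := by
  intro l
  induction l with
  | zero =>
    intro L
    rw [show (0:ℕ)+1 = 1 from rfl, F]
    simp only [Finset.mem_image, Finset.mem_range, Nat.lt_succ_iff]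
    constructor
    · rintro ⟨d, hd, rfl⟩
      refine ⟨⟨by simp, ?_, hd⟩, rfl⟩
      intro x hx; simp at hx; subst hx; exact Or.inl hd
    · rintro ⟨⟨hne, hmem, hhead⟩, hlen⟩
      cases L with
      | nil => exact absurd rfl hne
      | cons a t =>
        cases t with
        | nil => exact ⟨a, hhead, rfl⟩
        | cons b t => simp at hlen
  | succ l ih =>
    intro L
    rw [show l+1+1 = l+2 from rfl, F]
    simp only [Finset.mem_image, Finset.mem_product]
    constructor
    · rintro ⟨⟨M, e⟩, ⟨hM, he⟩, rfl⟩
      obtain ⟨⟨hne, hmem, hhead⟩, hlen⟩ := (ih M).1 hM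
      refine ⟨⟨by simp, ?_, ?_⟩, by simp [hlen]⟩
      · intro x hx
        rcases List.mem_append.1 hx with hx | hx
        · exact hmem x hx
        · simp at hx; subst hx; exact mem_Jfin.1 he
      · rw [headI_append_singleton M e hne]; exact hhead
    · rintro ⟨⟨hne, hmem, hhead⟩, hlen⟩
      refine ⟨⟨L.dropLast, L.getLast hne⟩, ⟨?_, ?_⟩, List.dropLast_append_getLast hne⟩
      · rw [ih]
        have h2 : 2 ≤ L.length := by omega
        refine ⟨⟨?_, ?_, ?_⟩, by simp [List.length_dropLast, hlen]⟩
        · intro hd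
          have := congrArg List.length hd
          simp [List.length_dropLast, hlen] at this
        · intro x hx; exact hmem x (List.dropLast_subset L hx)
        · rw [headI_dropLast L h2]; exact hhead
      · exact mem_Jfin.2 (hmem _ (List.getLast_mem hne))



lemma union_Ico (a u : ℝ) (hu : 0 ≤ u) (s t : ℕ) (hst : s ≤ t) :
    ⋃ e ∈ Finset.Ico s t, Set.Ico (a + (e:ℝ)*u) (a + ((e:ℝ)+1)*u)
      = Set.Ico (a + (s:ℝ)*u) (a + (t:ℝ)*u) := by
  induction t, hst using Nat.le_induction with
  | base => simp
  | succ t hst ih =>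
    have hins : Finset.Ico s (t+1) = insert t (Finset.Ico s t) := by
      ext x; simp [Finset.mem_Ico, Finset.mem_insert]; omega
    have hst' : (s:ℝ) ≤ t := by exact_mod_cast hst
    rw [hins, Finset.set_biUnion_insert, ih, Set.union_comm, Set.Ico_union_Ico_eq_Ico]
    · push_cast; ring_nf
    · nlinarith
    · nlinarith
  
lemma Ico_diff_middle {A X Y B : ℝ} (h1 : A ≤ X) (h2 : X ≤ Y) (h3 : Y ≤ B) :
    Set.Ico A B \ Set.Ico X Y = Set.Ico A X ∪ Set.Ico Y B := by
  ext x
  simp only [Set.mem_diff, Set.mem_Ico, Set.mem_union, not_and, not_lt]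
  constructor
  · rintro ⟨⟨hA, hB⟩, h⟩
    by_cases hx : x < X
    · exact Or.inl ⟨hA, hx⟩
    · exact Or.inr ⟨h (not_lt.1 hx), hB⟩
  · rintro (⟨ha, hb⟩ | ⟨ha, hb⟩)
    · exact ⟨⟨ha, hb.trans_le (h2.trans h3)⟩, fun hX => absurd (hX.trans_lt hb) (lt_irrefl _)⟩
    · exact ⟨⟨(h1.trans h2).trans ha, hb⟩, fun _ => ha⟩


noncomputable def blk (p : ℕ) (L : List ℕ) : Set ℝ :=
  Set.Ico (padicSum p L) (padicSum p L + 1/(p:ℝ)^L.length)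

noncomputable def tld (p c : ℕ) (L : List ℕ) : Set ℝ :=
  Set.Ico (padicSum p L + ((c:ℝ)+1)/(p:ℝ)^(L.length+1))
    (padicSum p L + 1/(p:ℝ)^L.length - ((c:ℝ)+1)/(p:ℝ)^(L.length+1))

lemma blk_concat (p : ℕ) (hp0 : 0 < p) (L : List ℕ) (e : ℕ) :
    blk p (L ++ [e]) = Set.Ico (padicSum p L + (e:ℝ) * (1/(p:ℝ)^(L.length+1)))
      (padicSum p L + ((e:ℝ)+1) * (1/(p:ℝ)^(L.length+1))) := by
  rw [blk, padicSum_concat, List.length_append, List.length_singleton]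
  congr 1 <;> ring

lemma blk_diff_tld (p c : ℕ) (hp : 2*c+3 ≤ p) (L : List ℕ) :
    blk p L \ tld p c L = ⋃ e ∈ Jfin p c, blk p (L ++ [e]) := by
  have hp0 : 0 < p := by omega
  have hq0 : (0:ℝ) < p := by exact_mod_cast hp0
  have hqne : (p:ℝ) ≠ 0 := ne_of_gt hq0
  have hc1p : c+1 ≤ p := by omega
  have hu0 : (0:ℝ) < 1/(p:ℝ)^(L.length+1) := by positivity
  have hrhs : (⋃ e ∈ Jfin p c, blk p (L ++ [e]))
      = Set.Ico (padicSum p L + ((0:ℕ):ℝ)*(1/(p:ℝ)^(L.length+1)))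
          (padicSum p L + ((c+1:ℕ):ℝ)*(1/(p:ℝ)^(L.length+1)))
        ∪ Set.Ico (padicSum p L + ((p-(c+1):ℕ):ℝ)*(1/(p:ℝ)^(L.length+1)))
          (padicSum p L + ((p:ℕ):ℝ)*(1/(p:ℝ)^(L.length+1))) := by
    rw [show Jfin p c = Finset.Ico 0 (c+1) ∪ Finset.Ico (p-(c+1)) p from by
        rw [Jfin, Finset.range_eq_Ico],
      Finset.set_biUnion_union,
      ← union_Ico _ _ hu0.le 0 (c+1) (by omega), ← union_Ico _ _ hu0.le (p-(c+1)) p (by omega)]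
    congr 1 <;> exact Set.iUnion₂_congr fun e _ => blk_concat p hp0 L e
  rw [hrhs, blk, tld,
    show padicSum p L + ((0:ℕ):ℝ)*(1/(p:ℝ)^(L.length+1)) = padicSum p L by push_cast; ring]
  have h1 : padicSum p L ≤ padicSum p L + ((c+1:ℕ):ℝ)*(1/(p:ℝ)^(L.length+1)) := by
    have : (0:ℝ) ≤ ((c+1:ℕ):ℝ) := by positivity
    nlinarith
  have h2 : padicSum p L + ((c+1:ℕ):ℝ)*(1/(p:ℝ)^(L.length+1))
      ≤ padicSum p L + ((p-(c+1):ℕ):ℝ)*(1/(p:ℝ)^(L.length+1)) := by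
    have : ((c+1:ℕ):ℝ) ≤ ((p-(c+1):ℕ):ℝ) := by exact_mod_cast (by omega : c+1 ≤ p-(c+1))
    nlinarith
  have h3 : padicSum p L + ((p-(c+1):ℕ):ℝ)*(1/(p:ℝ)^(L.length+1))
      ≤ padicSum p L + ((p:ℕ):ℝ)*(1/(p:ℝ)^(L.length+1)) := by
    have : ((p-(c+1):ℕ):ℝ) ≤ ((p:ℕ):ℝ) := by exact_mod_cast (by omega : p-(c+1) ≤ p)
    nlinarith
  have y1 : padicSum p L + 1/(p:ℝ)^L.length - ((c:ℝ)+1)/(p:ℝ)^(L.length+1)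
      = padicSum p L + ((p-(c+1):ℕ):ℝ)*(1/(p:ℝ)^(L.length+1)) := by
    rw [Nat.cast_sub hc1p, pow_succ]
    push_cast
    field_simp
    ring
  have x1 : padicSum p L + ((c:ℝ)+1)/(p:ℝ)^(L.length+1)
      = padicSum p L + ((c+1:ℕ):ℝ)*(1/(p:ℝ)^(L.length+1)) := by push_cast; ring
  have b1 : padicSum p L + 1/(p:ℝ)^L.length
      = padicSum p L + ((p:ℕ):ℝ)*(1/(p:ℝ)^(L.length+1)) := by
    rw [pow_succ]
    field_simp
  rw [y1, x1, b1]
  exact Ico_diff_middle h1 h2 h3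

lemma tld_subset_blk (p c : ℕ) (L : List ℕ) : tld p c L ⊆ blk p L := by
  have h : (0:ℝ) ≤ ((c:ℝ)+1)/(p:ℝ)^(L.length+1) := by positivity
  apply Set.Ico_subset_Ico <;> linarith

lemma blk_disjoint (p c : ℕ) (hp : 2*c+3 ≤ p) (l : ℕ) :
    (↑(F p c (l+1)) : Set (List ℕ)).PairwiseDisjoint (blk p) := by
  intro L hL L' hL' hne
  simp only [Finset.mem_coe] at hL hL'
  have h1 := length_of_mem_F p c _ _ hL
  have h2 := length_of_mem_F p c _ _ hL'
  have hJ1 := ((mem_F_iff p c l L).1 hL).1.2.1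
  have hJ2 := ((mem_F_iff p c l L').1 hL').1.2.1
  have hb1 : ∀ x ∈ L, x < p := by
    intro x hx; rcases hJ1 x hx with h | h <;> omega
  have hb2 : ∀ x ∈ L', x < p := by
    intro x hx; rcases hJ2 x hx with h | h <;> omega
  have hsep := padicSum_sep p (by omega) L L' (by rw [h1, h2]) hb1 hb2 hne
  show Disjoint (blk p L) (blk p L')
  rw [Set.disjoint_left]
  intro x hx hx'
  rw [blk, Set.mem_Ico] at hx hx'
  rw [h1] at hsep hx
  rw [h2] at hx'
  rcases hsep with h | h
  · rcases hx with ⟨hx1, hx2⟩; rcases hx' with ⟨hx3, hx4⟩; linarith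
  · rcases hx with ⟨hx1, hx2⟩; rcases hx' with ⟨hx3, hx4⟩; linarith

def Tle (p c k : ℕ) : Set (List ℕ) :=
  {L | L ≠ [] ∧ L.length ≤ k ∧ (∀ x ∈ L, Jpred p c x) ∧ L.headI ≤ c}

lemma blk_singleton (p : ℕ) (d : ℕ) :
    blk p [d] = Set.Ico ((0:ℝ) + (d:ℝ)*(1/(p:ℝ))) ((0:ℝ) + ((d:ℝ)+1)*(1/(p:ℝ))) := by
  rw [blk, padicSum_cons, padicSum_nil, List.length_singleton]
  congr 1 <;> ring

lemma key_identity (p c : ℕ) (hp : 2*c+3 ≤ p) (k : ℕ) :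
    Set.Ico (0:ℝ) (((c:ℝ)+1)/p) \ (⋃ L ∈ Tle p c k, tld p c L)
      = ⋃ L ∈ F p c (k+1), blk p L := by
  have hp0 : 0 < p := by omega
  have hq0 : (0:ℝ) < p := by exact_mod_cast hp0
  induction k with
  | zero =>
    have hT : ⋃ L ∈ Tle p c 0, tld p c L = (∅ : Set ℝ) := by
      refine Set.eq_empty_of_forall_notMem fun x hx => ?_
      simp only [Set.mem_iUnion, exists_prop] at hx
      obtain ⟨L, ⟨hne, hlen, _⟩, _⟩ := hx
      exact hne (List.length_eq_zero_iff.1 (Nat.le_zero.1 hlen))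
    rw [hT, Set.diff_empty]
    have hcalc : ⋃ L ∈ F p c 1, blk p L
        = ⋃ d ∈ Finset.Ico 0 (c+1),
            Set.Ico ((0:ℝ) + (d:ℝ)*(1/(p:ℝ))) ((0:ℝ) + ((d:ℝ)+1)*(1/(p:ℝ))) := by
      ext x
      simp only [Set.mem_iUnion, exists_prop]
      constructor
      · rintro ⟨L, hL, hx⟩
        rw [show (1:ℕ) = 0+1 from rfl, F] at hL
        obtain ⟨d, hd, rfl⟩ := Finset.mem_image.1 hL
        refine ⟨d, Finset.mem_Ico.2 ⟨Nat.zero_le _, Finset.mem_range.1 hd⟩, ?_⟩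
        rwa [blk_singleton] at hx
      · rintro ⟨d, hd, hx⟩
        refine ⟨[d], ?_, by rwa [blk_singleton]⟩
        rw [show (1:ℕ) = 0+1 from rfl, F]
        exact Finset.mem_image.2 ⟨d, Finset.mem_range.2 (Finset.mem_Ico.1 hd).2, rfl⟩
    rw [hcalc, union_Ico 0 (1/(p:ℝ)) (by positivity) 0 (c+1) (by omega),
      show (0:ℝ) + ((0:ℕ):ℝ)*(1/(p:ℝ)) = 0 by push_cast; ring,
      show (0:ℝ) + ((c+1:ℕ):ℝ)*(1/(p:ℝ)) = ((c:ℝ)+1)/p by push_cast; ring]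
  | succ k ih =>
    have hsplit : (⋃ L ∈ Tle p c (k+1), tld p c L)
        = (⋃ L ∈ Tle p c k, tld p c L) ∪ (⋃ L ∈ F p c (k+1), tld p c L) := by
      ext x
      simp only [Set.mem_iUnion, Set.mem_union, exists_prop]
      constructor
      · rintro ⟨L, ⟨hne, hlen, hmem, hhead⟩, hx⟩
        rcases Nat.lt_or_ge L.length (k+1) with h | h
        · exact Or.inl ⟨L, ⟨hne, by omega, hmem, hhead⟩, hx⟩
        · exact Or.inr ⟨L, (mem_F_iff p c k L).2 ⟨⟨hne, hmem, hhead⟩, by omega⟩, hx⟩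
      · rintro (⟨L, ⟨hne, hlen, hmem, hhead⟩, hx⟩ | ⟨L, hL, hx⟩)
        · exact ⟨L, ⟨hne, by omega, hmem, hhead⟩, hx⟩
        · obtain ⟨⟨hne, hmem, hhead⟩, hlen⟩ := (mem_F_iff p c k L).1 hL
          exact ⟨L, ⟨hne, by omega, hmem, hhead⟩, hx⟩
    rw [hsplit, ← Set.diff_diff, ih]
    have hstep : (⋃ L ∈ F p c (k+1), blk p L) \ (⋃ L ∈ F p c (k+1), tld p c L)
        = ⋃ L ∈ F p c (k+1), (blk p L \ tld p c L) := by
      ext x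
      simp only [Set.mem_diff, Set.mem_iUnion, exists_prop, not_exists, not_and]
      constructor
      · rintro ⟨⟨L, hL, hx⟩, hnx⟩
        exact ⟨L, hL, hx, hnx L hL⟩
      · rintro ⟨L, hL, hx, hnx⟩
        refine ⟨⟨L, hL, hx⟩, fun L' hL' hx' => ?_⟩
        by_cases h : L' = L
        · subst h; exact hnx hx'
        · have hd := blk_disjoint p c hp k (Finset.mem_coe.2 hL) (Finset.mem_coe.2 hL')
            (fun hh => h hh.symm)
          exact (Set.disjoint_left.1 hd hx) (tld_subset_blk p c L' hx')
    rw [hstep, Set.iUnion₂_congr fun L (_ : L ∈ F p c (k+1)) => blk_diff_tld p c hp L]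
    ext x
    simp only [Set.mem_iUnion, exists_prop]
    constructor
    · rintro ⟨L, hL, e, he, hx⟩
      refine ⟨L ++ [e], ?_, hx⟩
      rw [show k+1+1 = k+2 from rfl, F]
      exact Finset.mem_image.2 ⟨(L, e), Finset.mem_product.2 ⟨hL, he⟩, rfl⟩
    · rintro ⟨L, hL, hx⟩
      rw [show k+1+1 = k+2 from rfl, F] at hL
      obtain ⟨⟨M, e⟩, hMe, rfl⟩ := Finset.mem_image.1 hL
      rw [Finset.mem_product] at hMe
      exact ⟨M, hMe.1, e, hMe.2, hx⟩

lemma vol_blk_biUnion (p c : ℕ) (hp : 2*c+3 ≤ p) (l : ℕ) :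
    MeasureTheory.volume (⋃ L ∈ F p c (l+1), blk p L)
      = ENNReal.ofReal (((c:ℝ)+1) * (2*((c:ℝ)+1))^l / (p:ℝ)^(l+1)) := by
  have hq0 : (0:ℝ) < p := by
    have : 0 < p := by omega
    exact_mod_cast this
  rw [MeasureTheory.measure_biUnion_finset (blk_disjoint p c hp l)
    (fun L _ => measurableSet_Ico)]
  have hterm : ∀ L ∈ F p c (l+1), MeasureTheory.volume (blk p L)
      = ENNReal.ofReal (1/(p:ℝ)^(l+1)) := by
    intro L hL
    rw [blk, Real.volume_Ico, length_of_mem_F p c _ _ hL, add_sub_cancel_left]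
  rw [Finset.sum_congr rfl hterm, Finset.sum_const, card_F p c hp l, nsmul_eq_mul]
  rw [← ENNReal.ofReal_natCast, ← ENNReal.ofReal_mul (by positivity)]
  congr 1
  push_cast
  ring

end AkAux

open AkAux in
theorem measure_Ak_even (n p : ℕ) (hn : 4 ≤ n) (heven : Even n)
    (hp : (n : ℤ) - 2 < p) (hp2 : 2 ≤ p) :
    (∀ k : ℕ, 1 ≤ k →
      MeasureTheory.volume
        (Set.Ico (0 : ℝ) (((n : ℝ) - 2) / (2 * p)) \
          ⋃ L ∈ {L : List ℕ | L ≠ [] ∧ L.length ≤ k ∧ (∀ x ∈ L, x ≤ n - 3) ∧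
              L.headI ≤ n / 2 - 2},
            Set.Ico
              (padicSum p (L.map fun m => if m ≤ n / 2 - 2 then m else p - (m - (n / 2 - 2)))
                + ((n : ℝ) - 2) / (2 * (p : ℝ) ^ (L.length + 1)))
              (padicSum p (L.map fun m => if m ≤ n / 2 - 2 then m else p - (m - (n / 2 - 2)))
                + 1 / (p : ℝ) ^ L.length - ((n : ℝ) - 2) / (2 * (p : ℝ) ^ (L.length + 1))))
        = ENNReal.ofReal (((n : ℝ) - 2) ^ (k + 1) / (2 * (p : ℝ) ^ (k + 1)))) ∧
    MeasureTheory.volume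
      (Set.Ico (0 : ℝ) (((n : ℝ) - 2) / (2 * p)) \
        ⋃ L ∈ {L : List ℕ | L ≠ [] ∧ (∀ x ∈ L, x ≤ n - 3) ∧ L.headI ≤ n / 2 - 2},
          Set.Ico
            (padicSum p (L.map fun m => if m ≤ n / 2 - 2 then m else p - (m - (n / 2 - 2)))
              + ((n : ℝ) - 2) / (2 * (p : ℝ) ^ (L.length + 1)))
            (padicSum p (L.map fun m => if m ≤ n / 2 - 2 then m else p - (m - (n / 2 - 2)))
              + 1 / (p : ℝ) ^ L.length - ((n : ℝ) - 2) / (2 * (p : ℝ) ^ (L.length + 1))))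
      = 0 := by
  classical
  obtain ⟨t, ht⟩ := heven
  set c := n / 2 - 2 with hc
  have hn4 : n = 2*c + 4 := by omega
  have hnp : n < p + 2 := by
    have h1 : (n:ℤ) < (p:ℤ) + 2 := by linarith
    exact_mod_cast h1
  have hpc : 2*c + 3 ≤ p := by omega
  have hp0 : 0 < p := by omega
  have hq0 : (0:ℝ) < p := by exact_mod_cast hp0
  have hn2R : (n:ℝ) - 2 = 2*((c:ℝ)+1) := by
    rw [hn4]; push_cast; ring
  set f : ℕ → ℕ := fun m => if m ≤ c then m else p - (m - c) with hf
  set g : ℕ → ℕ := fun e => if e ≤ c then e else c + (p - e) with hg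
  have hn3 : n - 3 = 2*c + 1 := by omega
  -- basic facts about f and g
  have hfwd_mem : ∀ L : List ℕ, (∀ x ∈ L, x ≤ n - 3) → ∀ x ∈ L.map f, Jpred p c x := by
    intro L hL x hx
    rw [List.mem_map] at hx
    obtain ⟨y, hy, rfl⟩ := hx
    have hyb : y ≤ 2*c+1 := by rw [← hn3]; exact hL y hy
    rw [hf]
    dsimp only
    split_ifs with h
    · exact Or.inl h
    · right; constructor <;> omega
  have hfg : ∀ e, Jpred p c e → f (g e) = e := by
    intro e he
    rw [hf, hg]
    dsimp only
    rcases he with h | h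
    · rw [if_pos h, if_pos h]
    · have h1 : ¬ e ≤ c := by omega
      rw [if_neg h1]
      have h2 : ¬ c + (p - e) ≤ c := by omega
      rw [if_neg h2]
      omega
  have hback : ∀ M : List ℕ, (∀ x ∈ M, Jpred p c x) → (M.map g).map f = M := by
    intro M hM
    rw [List.map_map]
    have : ∀ x ∈ M, (f ∘ g) x = id x := fun x hx => hfg x (hM x hx)
    rw [List.map_congr_left this, List.map_id]
  have hgmem : ∀ e, Jpred p c e → g e ≤ n - 3 := by
    intro e he
    rw [hg]; dsimp only
    rcases he with h | h
    · rw [if_pos h]; omega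
    · rw [if_neg (by omega)]; omega
  -- the tilde intervals
  have hsetL : ∀ L : List ℕ,
      Set.Ico (padicSum p (L.map f) + ((n:ℝ)-2)/(2*(p:ℝ)^(L.length+1)))
        (padicSum p (L.map f) + 1/(p:ℝ)^L.length - ((n:ℝ)-2)/(2*(p:ℝ)^(L.length+1)))
      = tld p c (L.map f) := by
    intro L
    rw [show ((n:ℝ)-2)/(2*(p:ℝ)^(L.length+1)) = ((c:ℝ)+1)/(p:ℝ)^(L.length+1) by
        rw [hn2R]; ring,
      tld, List.length_map]
  have hI0 : Set.Ico (0:ℝ) (((n:ℝ)-2)/(2*p)) = Set.Ico (0:ℝ) (((c:ℝ)+1)/p) := by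
    rw [hn2R, mul_div_mul_left _ _ (two_ne_zero)]
  -- image lemmas
  have himg_le : ∀ k : ℕ,
      List.map f '' {L : List ℕ | L ≠ [] ∧ L.length ≤ k ∧ (∀ x ∈ L, x ≤ n - 3) ∧ L.headI ≤ c}
        = Tle p c k := by
    intro k
    ext M
    constructor
    · rintro ⟨L, ⟨hne, hlen, hmem, hhead⟩, rfl⟩
      refine ⟨by simpa using hne, by simpa using hlen, hfwd_mem L hmem, ?_⟩
      cases L with
      | nil => exact absurd rfl hne
      | cons a tl =>
        have ha : a ≤ c := hhead
        simp only [List.map_cons, List.headI_cons]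
        rw [hf]; dsimp only; rw [if_pos ha]; exact ha
    · rintro ⟨hne, hlen, hmem, hhead⟩
      refine ⟨M.map g, ⟨by simpa using hne, by simpa using hlen, ?_, ?_⟩, hback M hmem⟩
      · intro x hx
        rw [List.mem_map] at hx
        obtain ⟨e, he, rfl⟩ := hx
        exact hgmem e (hmem e he)
      · cases M with
        | nil => exact absurd rfl hne
        | cons a tl =>
          have ha : a ≤ c := hhead
          simp only [List.map_cons, List.headI_cons]
          rw [hg]; dsimp only; rw [if_pos ha]; exact ha
  have himg_all :
      List.map f '' {L : List ℕ | L ≠ [] ∧ (∀ x ∈ L, x ≤ n - 3) ∧ L.headI ≤ c}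
        = {M : List ℕ | M ≠ [] ∧ (∀ x ∈ M, Jpred p c x) ∧ M.headI ≤ c} := by
    ext M
    constructor
    · rintro ⟨L, ⟨hne, hmem, hhead⟩, rfl⟩
      refine ⟨by simpa using hne, hfwd_mem L hmem, ?_⟩
      cases L with
      | nil => exact absurd rfl hne
      | cons a tl =>
        have ha : a ≤ c := hhead
        simp only [List.map_cons, List.headI_cons]
        rw [hf]; dsimp only; rw [if_pos ha]; exact ha
    · rintro ⟨hne, hmem, hhead⟩
      refine ⟨M.map g, ⟨by simpa using hne, ?_, ?_⟩, hback M hmem⟩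
      · intro x hx
        rw [List.mem_map] at hx
        obtain ⟨e, he, rfl⟩ := hx
        exact hgmem e (hmem e he)
      · cases M with
        | nil => exact absurd rfl hne
        | cons a tl =>
          have ha : a ≤ c := hhead
          simp only [List.map_cons, List.headI_cons]
          rw [hg]; dsimp only; rw [if_pos ha]; exact ha
  -- part 1
  have hpart1 : ∀ k : ℕ,
      MeasureTheory.volume
        (Set.Ico (0 : ℝ) (((n : ℝ) - 2) / (2 * p)) \
          ⋃ L ∈ {L : List ℕ | L ≠ [] ∧ L.length ≤ k ∧ (∀ x ∈ L, x ≤ n - 3) ∧ L.headI ≤ c},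
            Set.Ico
              (padicSum p (L.map f) + ((n : ℝ) - 2) / (2 * (p : ℝ) ^ (L.length + 1)))
              (padicSum p (L.map f)
                + 1 / (p : ℝ) ^ L.length - ((n : ℝ) - 2) / (2 * (p : ℝ) ^ (L.length + 1))))
        = ENNReal.ofReal (((n : ℝ) - 2) ^ (k + 1) / (2 * (p : ℝ) ^ (k + 1))) := by
    intro k
    have hU : (⋃ L ∈ {L : List ℕ | L ≠ [] ∧ L.length ≤ k ∧ (∀ x ∈ L, x ≤ n - 3) ∧ L.headI ≤ c},
            Set.Ico
              (padicSum p (L.map f) + ((n : ℝ) - 2) / (2 * (p : ℝ) ^ (L.length + 1)))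
              (padicSum p (L.map f)
                + 1 / (p : ℝ) ^ L.length - ((n : ℝ) - 2) / (2 * (p : ℝ) ^ (L.length + 1))))
        = ⋃ M ∈ Tle p c k, tld p c M := by
      rw [← himg_le k, Set.biUnion_image]
      exact Set.iUnion₂_congr fun L _ => hsetL L
    rw [hU, hI0, key_identity p c hpc k, vol_blk_biUnion p c hpc k]
    congr 1
    rw [hn2R]
    ring
  refine ⟨fun k _ => hpart1 k, ?_⟩
  -- part 2
  set A : Set ℝ := Set.Ico (0 : ℝ) (((n : ℝ) - 2) / (2 * p)) \
        ⋃ L ∈ {L : List ℕ | L ≠ [] ∧ (∀ x ∈ L, x ≤ n - 3) ∧ L.headI ≤ c},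
          Set.Ico
            (padicSum p (L.map f) + ((n : ℝ) - 2) / (2 * (p : ℝ) ^ (L.length + 1)))
            (padicSum p (L.map f)
              + 1 / (p : ℝ) ^ L.length - ((n : ℝ) - 2) / (2 * (p : ℝ) ^ (L.length + 1))) with hA
  have hsub : ∀ k : ℕ, A ⊆ Set.Ico (0 : ℝ) (((n : ℝ) - 2) / (2 * p)) \
        ⋃ L ∈ {L : List ℕ | L ≠ [] ∧ L.length ≤ k ∧ (∀ x ∈ L, x ≤ n - 3) ∧ L.headI ≤ c},
          Set.Ico
            (padicSum p (L.map f) + ((n : ℝ) - 2) / (2 * (p : ℝ) ^ (L.length + 1)))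
            (padicSum p (L.map f)
              + 1 / (p : ℝ) ^ L.length - ((n : ℝ) - 2) / (2 * (p : ℝ) ^ (L.length + 1))) := by
    intro k
    apply Set.diff_subset_diff_right
    apply Set.biUnion_subset_biUnion_left
    rintro L ⟨h1, _, h3, h4⟩
    exact ⟨h1, h3, h4⟩
  have hbound : ∀ k : ℕ, MeasureTheory.volume A
      ≤ ENNReal.ofReal ((1/2) * (((n:ℝ)-2)/p) ^ (k+1)) := by
    intro k
    calc MeasureTheory.volume A ≤ _ := MeasureTheory.measure_mono (hsub k)
    _ = ENNReal.ofReal (((n : ℝ) - 2) ^ (k + 1) / (2 * (p : ℝ) ^ (k + 1))) := hpart1 k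
    _ = ENNReal.ofReal ((1/2) * (((n:ℝ)-2)/p) ^ (k+1)) := by
        congr 1
        rw [div_pow]
        ring
  have hr0 : (0:ℝ) ≤ ((n:ℝ)-2)/p := by
    apply div_nonneg _ hq0.le
    have : (4:ℝ) ≤ n := by exact_mod_cast hn
    linarith
  have hr1 : ((n:ℝ)-2)/p < 1 := by
    rw [div_lt_one hq0]
    have h1 : (n:ℝ) < (p:ℝ) + 2 := by exact_mod_cast hnp
    linarith
  have htend : Filter.Tendsto (fun k : ℕ => ENNReal.ofReal ((1/2) * (((n:ℝ)-2)/p) ^ (k+1)))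
      Filter.atTop (nhds 0) := by
    have h1 : Filter.Tendsto (fun k : ℕ => (((n:ℝ)-2)/p) ^ (k+1)) Filter.atTop (nhds 0) := by
      have := tendsto_pow_atTop_nhds_zero_of_lt_one hr0 hr1
      exact this.comp (Filter.tendsto_add_atTop_nat 1)
    have h2 : Filter.Tendsto (fun k : ℕ => (1/2 : ℝ) * (((n:ℝ)-2)/p) ^ (k+1))
        Filter.atTop (nhds 0) := by
      have := h1.const_mul (1/2 : ℝ)
      simpa using this
    have h3 := ENNReal.tendsto_ofReal h2
    simpa using h3
  have : MeasureTheory.volume A ≤ 0 := ge_of_tendsto' htend hbound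
  exact le_antisymm this zero_le
end
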